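/- For N ∈ ℕ and distinct κ_1,…,κ_N > 0, c_1,…,c_N > 0, the determinant of the N×N matrix I_N + C_N(0,x) equals 1 + ∑_{∅≠I⊆{1,…,N}} a_I e^{−2∑_{j∈I} κ_j x}, where each coefficient a_I is strictly positive (a_I = ∏_{j∈I}(c_j²/(2κ_j)) · ∏_{j<ℓ, j,ℓ∈I} ((κ_j−κ_ℓ)/(κ_j+κ_ℓ))²). -/

import Mathlib

/-! Expanding `det (1 + A)` multilinearly in the rows gives the sum of all principal minors
`det A_I`. For `A = C_N(0,x)` each minor is the symmetric Cauchy matrix `(1/(κ_j+κ_ℓ))_{j,ℓ∈I}`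
rescaled on both sides by `c_j e^{-κ_j x}`. The Cauchy determinant follows by induction on `I`:
pivoting on a new index `a`, the Schur complement is again a Cauchy matrix, rescaled on both sides
by `(κ_a-κ_j)/(κ_a+κ_j)`. -/

noncomputable section

/-- The coefficient `a_I = ∏_{j∈I} c_j²/(2κ_j) · ∏_{j<ℓ ∈ I} ((κ_j-κ_ℓ)/(κ_j+κ_ℓ))²`. -/
def solitonCoeff {N : ℕ} (κ c : Fin N → ℝ) (I : Finset (Fin N)) : ℝ :=
  (∏ j ∈ I, (c j) ^ 2 / (2 * κ j)) *
    ∏ j ∈ I, ∏ l ∈ I.filter (fun l => j < l), ((κ j - κ l) / (κ j + κ l)) ^ 2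

open Matrix Finset

theorem Matrix.det_one_add_eq_sum_det_submatrix {n R : Type*} [Fintype n] [DecidableEq n]
    [CommRing R] (M : Matrix n n R) :
    det (1 + M) = ∑ s : Finset n, det (M.submatrix ((↑) : s → n) (↑)) := by
  rw [add_comm]
  change detRowAlternating ((fun i => M i) + fun i => (1 : Matrix n n R) i) = _
  rw [← AlternatingMap.coe_multilinearMap, MultilinearMap.map_add_univ]
  exact sum_congr rfl fun s _ => det_piecewise_one_eq_submatrix_det M s

theorem Matrix.det_submatrix_insert {ι K : Type*} [DecidableEq ι] [Field K] (M : Matrix ι ι K)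
    {a : ι} {s : Finset ι} (ha : a ∉ s) (hM : M a a ≠ 0) :
    det (M.submatrix ((↑) : ↥(insert a s) → ι) (↑)) =
      M a a * det (of fun i j : s => M i j - M i a * M a j / M a a) := by
  let e : s ⊕ Unit ≃ (insert a s : Finset ι) :=
    ((subtypeInsertEquivOption ha).trans (Equiv.optionEquivSumPUnit _)).symm
  let D : Matrix Unit Unit K := of fun _ _ => M a a
  let _ : Invertible D :=
    ⟨of fun _ _ => (M a a)⁻¹, by ext; simp [D, mul_apply, hM], by ext; simp [D, mul_apply, hM]⟩
  have hblocks : (M.submatrix ((↑) : ↥(insert a s) → ι) (↑)).submatrix e e =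
      fromBlocks (M.submatrix ((↑) : s → ι) (↑) : Matrix s s K) (of fun i _ => M i a)
        (of fun _ j => M a j) D := by
    ext (i | _) (j | _) <;> rfl
  rw [← det_submatrix_equiv_self e, hblocks, det_fromBlocks₂₂, det_unique]
  refine congrArg (M a a * ·) (congrArg det ?_)
  ext i j
  simp [D, mul_apply, div_eq_mul_inv, mul_right_comm]

theorem Finset.prod_prod_filter_lt_insert {ι M : Type*} [LinearOrder ι] [CommMonoid M]
    {g : ι → ι → M} (hg : ∀ i j, g i j = g j i) {a : ι} {s : Finset ι} (ha : a ∉ s) :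
    ∏ j ∈ insert a s, ∏ l ∈ (insert a s).filter (fun l => j < l), g j l =
      (∏ l ∈ s, g a l) * ∏ j ∈ s, ∏ l ∈ s.filter (fun l => j < l), g j l := by
  have hrow : ∀ j ∈ s, ∏ l ∈ (insert a s).filter (fun l => j < l), g j l =
      (if j < a then g a j else 1) * ∏ l ∈ s.filter (fun l => j < l), g j l := by
    intro j _
    rw [filter_insert]
    split_ifs with hja
    · rw [prod_insert fun h => ha (mem_filter.mp h).1, hg]
    · rw [one_mul]
  have hsplit : s.filter (fun l => l < a) = s.filter (fun l => ¬ a < l) :=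
    filter_congr fun l hl => by
      rw [not_lt, le_iff_lt_or_eq, or_iff_left fun h : l = a => ha (h ▸ hl)]
  rw [prod_insert ha, filter_insert, if_neg (lt_irrefl a), prod_congr rfl hrow,
    prod_mul_distrib, ← prod_filter, hsplit, ← mul_assoc, prod_filter_mul_prod_filter_not]

theorem Matrix.det_cauchy {ι K : Type*} [LinearOrder ι] [Field K] (κ : ι → K) (s : Finset ι)
    (hκ : ∀ i ∈ s, ∀ j ∈ s, κ i + κ j ≠ 0) :
    det (of fun i j : s => (κ i + κ j)⁻¹) =
      (∏ j ∈ s, (2 * κ j)⁻¹) *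
        ∏ j ∈ s, ∏ l ∈ s.filter (fun l => j < l), ((κ j - κ l) / (κ j + κ l)) ^ 2 := by
  induction s using Finset.induction_on with
  | empty => simp
  | @insert a s ha ih =>
    have hs : ∀ i ∈ s, ∀ j ∈ s, κ i + κ j ≠ 0 := fun i hi j hj =>
      hκ i (mem_insert_of_mem hi) j (mem_insert_of_mem hj)
    have haj : ∀ j ∈ s, κ a + κ j ≠ 0 := fun j hj =>
      hκ a (mem_insert_self a s) j (mem_insert_of_mem hj)
    have haa : κ a + κ a ≠ 0 := hκ a (mem_insert_self a s) a (mem_insert_self a s)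
    let d : s → K := fun i => (κ a - κ i) / (κ a + κ i)
    have hschur : (of fun i j : s =>
          (κ i + κ j)⁻¹ - (κ i + κ a)⁻¹ * (κ a + κ j)⁻¹ / (κ a + κ a)⁻¹) =
        diagonal d * (of fun i j : s => (κ i + κ j)⁻¹) * diagonal d := by
      ext i j
      have hai := haj i i.2
      have haj' := haj j j.2
      have hij := hs i i.2 j j.2
      simp only [of_apply, diagonal_mul, mul_diagonal, d]
      rw [add_comm (κ i) (κ a)]
      field_simp
      ring
    refine (det_submatrix_insert (of fun i j => (κ i + κ j)⁻¹) ha (inv_ne_zero haa)).trans ?_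
    have hsymm : ∀ i j, ((κ i - κ j) / (κ i + κ j)) ^ 2 = ((κ j - κ i) / (κ j + κ i)) ^ 2 :=
      fun i j => by rw [add_comm (κ j), ← neg_sub (κ i), neg_div, neg_sq]
    simp only [of_apply]
    rw [hschur, det_mul, det_mul, det_diagonal, ih hs, prod_insert ha,
      prod_prod_filter_lt_insert hsymm ha, prod_coe_sort s fun i => (κ a - κ i) / (κ a + κ i),
      prod_pow, two_mul]
    ring

theorem det_submatrix_eq_solitonCoeff_mul_exp {N : ℕ} (κ c : Fin N → ℝ)
    (hκ : ∀ i j, κ i + κ j ≠ 0) (x : ℝ) (I : Finset (Fin N)) :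
    det ((of fun j l => c j * c l * Real.exp (-(κ j + κ l) * x) / (κ j + κ l)).submatrix
        ((↑) : I → Fin N) (↑)) =
      solitonCoeff κ c I * Real.exp (-2 * (∑ j ∈ I, κ j) * x) := by
  let v : I → ℝ := fun j => c j * Real.exp (-κ j * x)
  have hfactor : (of fun j l => c j * c l * Real.exp (-(κ j + κ l) * x) / (κ j + κ l)).submatrix
      ((↑) : I → Fin N) (↑) = diagonal v * (of fun i j : I => (κ i + κ j)⁻¹) * diagonal v := by
    ext i j
    simp only [submatrix_apply, of_apply, diagonal_mul, mul_diagonal, v]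
    rw [show -(κ i + κ j) * x = -κ i * x + -κ j * x by ring, Real.exp_add]
    ring
  have hexp : Real.exp (-2 * (∑ j ∈ I, κ j) * x) = (∏ j ∈ I, Real.exp (-κ j * x)) ^ 2 := by
    rw [← Real.exp_sum, ← Real.exp_nat_mul, mul_sum, sum_mul, mul_sum]
    exact congrArg Real.exp (sum_congr rfl fun _ _ => by push_cast; ring)
  rw [hfactor, det_mul, det_mul, det_diagonal, det_cauchy κ I fun i _ j _ => hκ i j,
    prod_coe_sort I fun j => c j * Real.exp (-κ j * x), solitonCoeff, hexp, prod_mul_distrib]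
  simp only [div_eq_mul_inv, prod_mul_distrib, prod_pow]
  ring

theorem solitonCoeff_pos {N : ℕ} {κ c : Fin N → ℝ} (hκ : ∀ j, 0 < κ j)
    (hinj : Function.Injective κ) (hc : ∀ j, c j ≠ 0) (I : Finset (Fin N)) :
    0 < solitonCoeff κ c I := by
  refine mul_pos
    (prod_pos fun j _ => div_pos (pow_two_pos_of_ne_zero (hc j)) (mul_pos two_pos (hκ j)))
    (prod_pos fun j _ => prod_pos fun l hl => pow_two_pos_of_ne_zero (div_ne_zero ?_ ?_))
  · exact sub_ne_zero.2 (hinj.ne (mem_filter.1 hl).2.ne)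
  · exact (add_pos (hκ j) (hκ l)).ne'

/-- Expansion of the N-soliton tau function:
`det (1_N + C_N(0,x)) = 1 + ∑_{∅≠I} a_I e^{-2 ∑_{j∈I} κ_j x}` with all `a_I > 0`. -/
theorem statement3 (N : ℕ) (κ c : Fin N → ℝ) (hκ : ∀ j, 0 < κ j)
    (hinj : Function.Injective κ) (hc : ∀ j, 0 < c j) (x : ℝ) :
    (Matrix.det ((1 : Matrix (Fin N) (Fin N) ℝ) +
        Matrix.of fun j l => c j * c l * Real.exp (-(κ j + κ l) * x) / (κ j + κ l)) =
      1 + ∑ I ∈ Finset.univ.powerset.filter (fun I : Finset (Fin N) => I.Nonempty),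
        solitonCoeff κ c I * Real.exp (-2 * (∑ j ∈ I, κ j) * x)) ∧
    (∀ I : Finset (Fin N), I.Nonempty → 0 < solitonCoeff κ c I) := by
  refine ⟨?_, fun I _ => solitonCoeff_pos hκ hinj (fun j => (hc j).ne') I⟩
  have hempty : univ.filter (fun I : Finset (Fin N) => ¬ I.Nonempty) = {∅} := by
    ext I
    simp [not_nonempty_iff_eq_empty]
  rw [det_one_add_eq_sum_det_submatrix, powerset_univ,
    ← sum_filter_not_add_sum_filter univ fun I : Finset (Fin N) => I.Nonempty, hempty,
    sum_singleton, det_isEmpty]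
  exact congrArg (1 + ·) <| sum_congr rfl fun I _ =>
    det_submatrix_eq_solitonCoeff_mul_exp κ c (fun i j => (add_pos (hκ i) (hκ j)).ne') x I

end
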